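/- Let Q_1, …, Q_J ∈ ℂ^{dL×dL} be Hermitian positive semidefinite, y_1, …, y_J ≥ 0, ε > 0, α_T, α_S ≥ 0, κ_1, …, κ_{L−1} > 0, and define J(z) = L_ε(z) + α_T ‖z‖₂² + α_S S(z) on (ℂ^d)^L ≅ ℂ^{dL}. Then for all z, u ∈ ℂ^{dL} the second directional derivative satisfies d²/dt² J(z + t u)|_{t=0} ≤ 2B ‖u‖₂² with B = ‖Σ_{j=1}^J Q_j‖ + α_T + α_S ‖K‖, where ‖·‖ is the spectral norm and K is the tridiagonal matrix associated with (κ_ℓ). -/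

import Mathlib

open Matrix
open scoped ComplexOrder

/-- Spectral (operator 2-) norm of a square complex matrix. -/
noncomputable def specNorm {n : Type*} [Fintype n] [DecidableEq n] (A : Matrix n n ℂ) : ℝ :=
  ‖Matrix.toEuclideanCLM (𝕜 := ℂ) A‖

/-- Spectral (operator 2-) norm of a square real matrix. -/
noncomputable def specNormR {n : Type*} [Fintype n] [DecidableEq n] (A : Matrix n n ℝ) : ℝ :=
  ‖Matrix.toEuclideanCLM (𝕜 := ℝ) A‖

/-- The tridiagonal matrix `K ∈ ℝ^{L×L}` of the smoothness penalty, 0-based indexing. -/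
def Kmat (L : ℕ) (κ : ℕ → ℝ) : Matrix (Fin L) (Fin L) ℝ :=
  Matrix.of fun j k =>
    if (j : ℕ) = (k : ℕ) then
      (if (k : ℕ) = 0 then 0 else κ (k : ℕ)) +
      (if (k : ℕ) = L - 1 then 0 else κ ((k : ℕ) + 1))
    else if (j : ℕ) = (k : ℕ) + 1 then -κ ((k : ℕ) + 1)
    else if (k : ℕ) = (j : ℕ) + 1 then -κ ((j : ℕ) + 1)
    else 0

/-- The smoothness penalty `S(z) = Σ_{ℓ=1}^{L−1} κ_ℓ ‖z_{ℓ+1} − z_ℓ‖₂²`. -/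
noncomputable def Spen (d L : ℕ) (κ : ℕ → ℝ) (v : Fin L × Fin d → ℂ) : ℝ :=
  ∑ ℓ : Fin L,
    if h : (ℓ : ℕ) + 1 < L then
      κ ((ℓ : ℕ) + 1) * ∑ i : Fin d, ‖v (⟨(ℓ : ℕ) + 1, h⟩, i) - v (ℓ, i)‖ ^ 2
    else 0

/-- The regularized objective
`J(z) = L_ε(z) + α_T ‖z‖₂² + α_S S(z)` on `(ℂ^d)^L ≅ ℂ^{dL}`. -/
noncomputable def Jobj {d L Jn : ℕ} (Q : Fin Jn → Matrix (Fin L × Fin d) (Fin L × Fin d) ℂ)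
    (y : Fin Jn → ℝ) (ε αT αS : ℝ) (κ : ℕ → ℝ) (v : Fin L × Fin d → ℂ) : ℝ :=
  (∑ j, (Real.sqrt ((star v ⬝ᵥ ((Q j) *ᵥ v)).re + ε) - Real.sqrt (y j + ε)) ^ 2)
    + αT * ∑ p, ‖v p‖ ^ 2 + αS * Spen d L κ v

/- ### Auxiliary material -/

open scoped InnerProductSpace

section Aux

/-- Cross term of the smoothness penalty along a line. -/
noncomputable def SpenX (d L : ℕ) (κ : ℕ → ℝ) (z u : Fin L × Fin d → ℂ) : ℝ :=
  ∑ ℓ : Fin L,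
    if h : (ℓ : ℕ) + 1 < L then
      κ ((ℓ : ℕ) + 1) * ∑ i : Fin d,
        2 * ((z (⟨(ℓ : ℕ) + 1, h⟩, i) - z (ℓ, i)) *
          (starRingEnd ℂ) (u (⟨(ℓ : ℕ) + 1, h⟩, i) - u (ℓ, i))).re
    else 0

noncomputable def phiD (a b c s : ℝ) (t : ℝ) : ℝ :=
  (b + 2 * c * t) * (1 - s / Real.sqrt (a + b * t + c * t ^ 2))

lemma hasDerivAt_q (a b c t : ℝ) :
    HasDerivAt (fun t => a + b * t + c * t ^ 2) (b + 2 * c * t) t := by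
  have h : HasDerivAt (fun t : ℝ => a + b * t + c * t ^ 2)
      (0 + b * 1 + c * (2 * t ^ 1)) t :=
    ((hasDerivAt_const t a).add ((hasDerivAt_id t).const_mul b)).add
      ((hasDerivAt_pow 2 t).const_mul c)
  convert h using 1; ring

lemma hasDerivAt_lin (p q t : ℝ) : HasDerivAt (fun t : ℝ => p + q * t) q t := by
  simpa using ((hasDerivAt_id t).const_mul q).const_add p

lemma hasDerivAt_sqrt_q (a b c : ℝ) (hpos : ∀ t, 0 < a + b * t + c * t ^ 2) (t : ℝ) :
    HasDerivAt (fun t => Real.sqrt (a + b * t + c * t ^ 2))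
      ((b + 2 * c * t) / (2 * Real.sqrt (a + b * t + c * t ^ 2))) t := by
  have := (Real.hasDerivAt_sqrt (ne_of_gt (hpos t))).comp t (hasDerivAt_q a b c t)
  refine (this : HasDerivAt (fun t => Real.sqrt (a + b * t + c * t ^ 2)) _ t).congr_deriv ?_
  ring

lemma hasDerivAt_phi (a b c s : ℝ) (hpos : ∀ t, 0 < a + b * t + c * t ^ 2) (t : ℝ) :
    HasDerivAt (fun t => (Real.sqrt (a + b * t + c * t ^ 2) - s) ^ 2) (phiD a b c s t) t := by
  have h2 : HasDerivAt (fun t => (Real.sqrt (a + b * t + c * t ^ 2) - s) ^ 2)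
      (2 * (Real.sqrt (a + b * t + c * t ^ 2) - s) ^ 1 *
        ((b + 2 * c * t) / (2 * Real.sqrt (a + b * t + c * t ^ 2)))) t :=
    ((hasDerivAt_sqrt_q a b c hpos t).sub_const s).pow 2
  convert h2 using 1
  have hr : Real.sqrt (a + b * t + c * t ^ 2) ≠ 0 := by
    have := Real.sqrt_pos.mpr (hpos t); linarith
  unfold phiD
  field_simp

lemma hasDerivAt_phiD (a b c s : ℝ) (hpos : ∀ t, 0 < a + b * t + c * t ^ 2) :
    HasDerivAt (phiD a b c s)
      (2 * c - s * (4 * a * c - b ^ 2) / (2 * a * Real.sqrt a)) 0 := by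
  have ha : 0 < a := by nlinarith [hpos 0]
  have hra : 0 < Real.sqrt a := Real.sqrt_pos.mpr ha
  have hs' := hasDerivAt_sqrt_q a b c hpos 0
  have hrne : Real.sqrt (a + b * 0 + c * 0 ^ 2) ≠ 0 := by
    have := Real.sqrt_pos.mpr (hpos 0); linarith
  have hinv : HasDerivAt (fun t => s / Real.sqrt (a + b * t + c * t ^ 2))
      ((0 * Real.sqrt (a + b * 0 + c * 0 ^ 2) -
          s * ((b + 2 * c * 0) / (2 * Real.sqrt (a + b * 0 + c * 0 ^ 2)))) /
        (Real.sqrt (a + b * 0 + c * 0 ^ 2)) ^ 2) 0 :=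
    (hasDerivAt_const 0 s).div hs' hrne
  have hlin : HasDerivAt (fun t : ℝ => b + 2 * c * t) (2 * c) 0 := by
    simpa using ((hasDerivAt_id (0:ℝ)).const_mul (2*c)).const_add b
  have hprod := hlin.mul ((hasDerivAt_const (0:ℝ) (1:ℝ)).sub hinv)
  rw [show a + b * 0 + c * 0 ^ 2 = a from by ring] at hprod
  refine (hprod : HasDerivAt (phiD a b c s) _ 0).congr_deriv ?_
  simp only [Pi.sub_apply]
  rw [show Real.sqrt a ^ 2 = a from Real.sq_sqrt ha.le]
  field_simp
  ring

lemma quad_disc (a b c ε : ℝ) (hε : 0 < ε) (hc : 0 ≤ c)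
    (hp : ∀ t, ε ≤ a + b * t + c * t ^ 2) : b ^ 2 ≤ 4 * a * c := by
  rcases eq_or_lt_of_le hc with h0 | h0
  · have hb : b = 0 := by
      by_contra hb
      have h1 := hp ((ε - 1 - a) / b)
      rw [← h0] at h1
      have h2 : a + b * ((ε - 1 - a) / b) + 0 * ((ε - 1 - a) / b) ^ 2 = ε - 1 := by
        field_simp
        ring
      rw [h2] at h1
      linarith
    rw [hb, ← h0]; nlinarith
  · have h1 := hp (-(b / (2 * c)))
    have h2 : a + b * (-(b / (2 * c))) + c * (-(b / (2 * c))) ^ 2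
        = a - b ^ 2 / (4 * c) := by
      field_simp; ring
    rw [h2] at h1
    have h3 : b ^ 2 / (4 * c) ≤ a - ε := by linarith
    have h4 : b ^ 2 ≤ (a - ε) * (4 * c) := (div_le_iff₀ (by linarith)).mp h3
    nlinarith

lemma norm_sq_c (w : ℂ) : ‖w‖ ^ 2 = w.re ^ 2 + w.im ^ 2 := by
  rw [Complex.sq_norm, Complex.normSq_apply]; ring

lemma norm_add_smul_sq (w v : ℂ) (t : ℝ) :
    ‖w + t • v‖ ^ 2 = ‖w‖ ^ 2 + (2 * (w * (starRingEnd ℂ) v).re) * t + ‖v‖ ^ 2 * t ^ 2 := by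
  simp only [norm_sq_c, Complex.add_re, Complex.add_im, Complex.real_smul, Complex.mul_re,
    Complex.mul_im, Complex.conj_re, Complex.conj_im, Complex.ofReal_re, Complex.ofReal_im]
  ring

lemma dot_expand {n : Type*} [Fintype n] (Q : Matrix n n ℂ) (z u : n → ℂ) (t : ℝ) :
    (star (z + t • u) ⬝ᵥ Q *ᵥ (z + t • u)).re
      = (star z ⬝ᵥ Q *ᵥ z).re
        + ((star z ⬝ᵥ Q *ᵥ u).re + (star u ⬝ᵥ Q *ᵥ z).re) * t
        + (star u ⬝ᵥ Q *ᵥ u).re * t ^ 2 := by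
  have h1 : z + t • u = z + (t : ℂ) • u := by
    funext p; simp [Complex.real_smul]
  rw [h1, star_add, star_smul, Matrix.mulVec_add, Matrix.mulVec_smul, add_dotProduct,
    smul_dotProduct, dotProduct_add, dotProduct_smul]
  simp only [dotProduct_add, dotProduct_smul, star_trivial, RCLike.star_def,
    Complex.conj_ofReal, smul_eq_mul, Complex.add_re, Complex.mul_re, Complex.ofReal_re,
    Complex.ofReal_im]
  ring

lemma spen_expand (d L : ℕ) (κ : ℕ → ℝ) (z u : Fin L × Fin d → ℂ) (t : ℝ) :
    Spen d L κ (z + t • u)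
      = Spen d L κ z + SpenX d L κ z u * t + Spen d L κ u * t ^ 2 := by
  unfold Spen SpenX
  rw [Finset.sum_mul, Finset.sum_mul, ← Finset.sum_add_distrib, ← Finset.sum_add_distrib]
  refine Finset.sum_congr rfl fun ℓ _ => ?_
  by_cases h : (ℓ : ℕ) + 1 < L
  · simp only [dif_pos h]
    have key : ∀ (a b : Fin L × Fin d),
        (z + t • u) a - (z + t • u) b = (z a - z b) + t • (u a - u b) := by
      intro a b; simp [Pi.add_apply, Pi.smul_apply, smul_sub]; ring
    rw [Finset.sum_congr rfl (fun i _ => by rw [key, norm_add_smul_sq])]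
    rw [Finset.sum_add_distrib, Finset.sum_add_distrib, ← Finset.sum_mul, ← Finset.sum_mul]
    ring
  · simp only [dif_neg h]; ring

lemma dot_leC {n : Type*} [Fintype n] [DecidableEq n] (A : Matrix n n ℂ) (x : n → ℂ) :
    (star x ⬝ᵥ A *ᵥ x).re ≤ specNorm A * ∑ i, ‖x i‖ ^ 2 := by
  set T := Matrix.toEuclideanCLM (𝕜 := ℂ) A
  set x' : EuclideanSpace ℂ n := (WithLp.equiv 2 _).symm x with hx'
  have h1 : star x ⬝ᵥ A *ᵥ x = ⟪x', T x'⟫_ℂ := by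
    rw [EuclideanSpace.inner_eq_star_dotProduct]
    simp [T, x', Matrix.toLin'_apply]
    exact dotProduct_comm _ _
  have hn : ‖x'‖ ^ 2 = ∑ i, ‖x i‖ ^ 2 := by
    rw [EuclideanSpace.norm_eq, Real.sq_sqrt (by positivity)]
    rfl
  calc (star x ⬝ᵥ A *ᵥ x).re = (⟪x', T x'⟫_ℂ).re := by rw [h1]
    _ ≤ ‖(⟪x', T x'⟫_ℂ)‖ := Complex.re_le_norm _
    _ ≤ ‖x'‖ * ‖T x'‖ := norm_inner_le_norm _ _
    _ ≤ ‖x'‖ * (‖T‖ * ‖x'‖) := by gcongr; exact T.le_opNorm x'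
    _ = ‖T‖ * ‖x'‖ ^ 2 := by ring
    _ = specNorm A * ∑ i, ‖x i‖ ^ 2 := by rw [hn]; rfl

lemma dot_leR {n : Type*} [Fintype n] [DecidableEq n] (A : Matrix n n ℝ) (x : n → ℝ) :
    x ⬝ᵥ A *ᵥ x ≤ specNormR A * ∑ i, x i ^ 2 := by
  set T := Matrix.toEuclideanCLM (𝕜 := ℝ) A
  set x' : EuclideanSpace ℝ n := (WithLp.equiv 2 _).symm x with hx'
  have h1 : x ⬝ᵥ A *ᵥ x = ⟪x', T x'⟫_ℝ := by
    rw [EuclideanSpace.inner_eq_star_dotProduct]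
    simp [T, x', Matrix.toLin'_apply]
    exact dotProduct_comm _ _
  have hn : ‖x'‖ ^ 2 = ∑ i, x i ^ 2 := by
    rw [EuclideanSpace.norm_eq, Real.sq_sqrt (by positivity)]
    refine Finset.sum_congr rfl fun i _ => ?_
    rw [Real.norm_eq_abs, sq_abs]; rfl
  calc x ⬝ᵥ A *ᵥ x = ⟪x', T x'⟫_ℝ := h1
    _ ≤ ‖x'‖ * ‖T x'‖ := real_inner_le_norm _ _
    _ ≤ ‖x'‖ * (‖T‖ * ‖x'‖) := by gcongr; exact T.le_opNorm x'
    _ = ‖T‖ * ‖x'‖ ^ 2 := by ring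
    _ = specNormR A * ∑ i, x i ^ 2 := by rw [hn]; rfl

end Aux
lemma kmat_quad (L : ℕ) (κ : ℕ → ℝ) (x : Fin L → ℝ) :
    (∑ ℓ : Fin L, if h : (ℓ : ℕ) + 1 < L then
        κ ((ℓ : ℕ) + 1) * (x ⟨(ℓ : ℕ) + 1, h⟩ - x ℓ) ^ 2 else 0)
      = x ⬝ᵥ (Kmat L κ *ᵥ x) := by
  classical
  set X : ℕ → ℝ := fun n => if h : n < L then x ⟨n, h⟩ else 0 with hX
  have hXx : ∀ j : Fin L, x j = X (j : ℕ) := by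
    intro j; simp [hX, j.isLt]
  have hX0 : ∀ n, ¬ n < L → X n = 0 := by intro n hn; simp [hX, hn]
  set KN : ℕ → ℕ → ℝ := fun j k =>
    (if j = k then (if k = 0 then 0 else κ k) + (if k = L - 1 then 0 else κ (k + 1)) else 0)
    + (if j = k + 1 then -κ (k + 1) else 0)
    + (if k = j + 1 then -κ (j + 1) else 0) with hKN
  have hent : ∀ j k : Fin L, Kmat L κ j k = KN (j : ℕ) (k : ℕ) := by
    intro j k
    simp only [Kmat, Matrix.of_apply, hKN]
    split_ifs <;> first | ring1 | (exfalso; omega)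
  -- RHS as double range sum
  have hrhs : x ⬝ᵥ (Kmat L κ *ᵥ x)
      = ∑ j ∈ Finset.range L, ∑ k ∈ Finset.range L, X j * (KN j k * X k) := by
    simp only [dotProduct, Matrix.mulVec]
    have hinner : ∀ j : Fin L,
        ((fun k => Kmat L κ j k) ⬝ᵥ x) = ∑ k ∈ Finset.range L, KN (j : ℕ) k * X k := by
      intro j
      rw [dotProduct, ← Fin.sum_univ_eq_sum_range (fun k => KN (j:ℕ) k * X k)]
      exact Finset.sum_congr rfl fun k _ => by rw [hent, hXx]
    calc (∑ j : Fin L, x j * ((fun k => Kmat L κ j k) ⬝ᵥ x))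
        = ∑ j : Fin L, X (j:ℕ) * ∑ k ∈ Finset.range L, KN (j:ℕ) k * X k := by
          exact Finset.sum_congr rfl fun j _ => by rw [hXx, hinner]
      _ = ∑ j ∈ Finset.range L, X j * ∑ k ∈ Finset.range L, KN j k * X k :=
          Fin.sum_univ_eq_sum_range (fun j => X j * ∑ k ∈ Finset.range L, KN j k * X k) L
      _ = ∑ j ∈ Finset.range L, ∑ k ∈ Finset.range L, X j * (KN j k * X k) := by
          exact Finset.sum_congr rfl fun j _ => Finset.mul_sum _ _ _
  -- LHS as range sum
  have hlhs : (∑ ℓ : Fin L, if h : (ℓ : ℕ) + 1 < L then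
        κ ((ℓ : ℕ) + 1) * (x ⟨(ℓ : ℕ) + 1, h⟩ - x ℓ) ^ 2 else 0)
      = ∑ ℓ ∈ Finset.range L, if ℓ + 1 < L then κ (ℓ + 1) * (X (ℓ + 1) - X ℓ) ^ 2 else 0 := by
    rw [← Fin.sum_univ_eq_sum_range (fun ℓ => if ℓ + 1 < L then κ (ℓ+1) * (X (ℓ+1) - X ℓ)^2 else 0)]
    refine Finset.sum_congr rfl fun ℓ _ => ?_
    by_cases h : (ℓ : ℕ) + 1 < L
    · rw [dif_pos h, if_pos h, hXx ℓ, hXx ⟨(ℓ:ℕ)+1, h⟩]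
    · rw [dif_neg h, if_neg h]
  rw [hrhs, hlhs]
  -- split the double sum into three pieces
  have hsplit : ∀ j ∈ Finset.range L, ∀ k ∈ Finset.range L,
      X j * (KN j k * X k)
        = (if j = k then ((if k = 0 then 0 else κ k) + (if k = L - 1 then 0 else κ (k + 1)))
            * X k ^ 2 else 0)
          + (if j = k + 1 then -(κ (k + 1) * X (k+1) * X k) else 0)
          + (if k = j + 1 then -(κ (j + 1) * X j * X (j+1)) else 0) := by
    intro j _ k _
    simp only [hKN]
    split_ifs <;> first | (subst_vars; ring1) | (exfalso; omega)
  rw [Finset.sum_congr rfl (fun j hj => Finset.sum_congr rfl (fun k hk => hsplit j hj k hk))]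
  simp only [Finset.sum_add_distrib]
  -- evaluate the three pieces
  have hS1 : ∀ j ∈ Finset.range L, (∑ k ∈ Finset.range L,
      if j = k then ((if k = 0 then 0 else κ k) + (if k = L - 1 then 0 else κ (k + 1))) * X k ^ 2
      else 0)
      = ((if j = 0 then 0 else κ j) + (if j = L - 1 then 0 else κ (j + 1))) * X j ^ 2 := by
    intro j hj
    rw [Finset.sum_ite_eq _ j _]
    exact if_pos hj
  have hS2 : ∀ j ∈ Finset.range L, (∑ k ∈ Finset.range L,
      if j = k + 1 then -(κ (k + 1) * X (k+1) * X k) else 0)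
      = if 1 ≤ j then -(κ j * X j * X (j-1)) else 0 := by
    intro j hj
    by_cases h1 : 1 ≤ j
    case neg =>
      rw [if_neg h1]
      exact Finset.sum_eq_zero fun k _ => if_neg (by omega)
    case pos =>
      rw [if_pos h1]
      obtain ⟨k0, rfl⟩ : ∃ k0, j = k0 + 1 := ⟨j - 1, by omega⟩
      have : ∀ k ∈ Finset.range L, (if k0 + 1 = k + 1 then -(κ (k + 1) * X (k+1) * X k) else 0)
          = if k = k0 then -(κ (k0 + 1) * X (k0+1) * X k0) else 0 := by
        intro k _
        by_cases h : k = k0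
        · subst h; rw [if_pos rfl, if_pos rfl]
        · rw [if_neg (by omega), if_neg h]
      rw [Finset.sum_congr rfl this, Finset.sum_ite_eq' _ k0 _, if_pos (by simp at hj ⊢; omega)]
      simp
  have hS3 : ∀ j ∈ Finset.range L, (∑ k ∈ Finset.range L,
      if k = j + 1 then -(κ (j + 1) * X j * X (j+1)) else 0)
      = -(κ (j + 1) * X j * X (j+1)) := by
    intro j hj
    rw [Finset.sum_ite_eq' _ (j+1) _]
    by_cases h : j + 1 ∈ Finset.range L
    · exact if_pos h
    · rw [if_neg h, hX0 (j+1) (by simpa using h)]; ring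
  rw [Finset.sum_congr rfl hS1, Finset.sum_congr rfl hS2, Finset.sum_congr rfl hS3]
  -- now everything is single sums over range L
  rcases Nat.eq_zero_or_pos L with hL0 | hLpos
  · subst hL0; simp
  obtain ⟨m, rfl⟩ : ∃ m, L = m + 1 := ⟨L - 1, by omega⟩
  -- reduce each sum to range m
  rw [Finset.sum_range_succ (fun ℓ => if ℓ + 1 < m + 1 then κ (ℓ+1) * (X (ℓ+1) - X ℓ)^2 else 0),
    if_neg (by omega)]
  rw [Finset.sum_range_succ (fun j => ((if j = 0 then 0 else κ j)
      + (if j = m + 1 - 1 then 0 else κ (j + 1))) * X j ^ 2)]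
  rw [Finset.sum_range_succ' (fun j => if 1 ≤ j then -(κ j * X j * X (j-1)) else 0) m]
  rw [Finset.sum_range_succ (fun j => -(κ (j + 1) * X j * X (j+1)))]
  simp only [Nat.add_sub_cancel, eq_self_iff_true, if_true, if_neg (by omega : ¬ (1:ℕ) ≤ 0),
    if_pos (Nat.le_add_left 1 _), hX0 (m+1) (by omega : ¬ m+1 < m+1), mul_zero,
    neg_zero, add_zero]
  have e1 : ∀ ℓ ∈ Finset.range m, (if ℓ + 1 < m + 1 then κ (ℓ+1) * (X (ℓ+1) - X ℓ)^2 else 0)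
      = κ (ℓ+1) * (X (ℓ+1) - X ℓ)^2 := fun ℓ hℓ => if_pos (by simp at hℓ; omega)
  have e2 : ∀ j ∈ Finset.range m, ((if j = 0 then 0 else κ j)
      + (if j = m then 0 else κ (j + 1))) * X j ^ 2
      = (if j = 0 then 0 else κ j) * X j ^ 2 + κ (j + 1) * X j ^ 2 := by
    intro j hj
    have hne : ¬ (j = m) := by simp at hj; omega
    rw [if_neg hne]; ring
  rw [Finset.sum_congr rfl e1, Finset.sum_congr rfl e2]
  rw [Finset.sum_add_distrib]
  have e4 : (∑ j ∈ Finset.range (m+1), (if j = 0 then 0 else κ j) * X j ^ 2)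
      = ∑ j ∈ Finset.range m, κ (j+1) * X (j+1) ^ 2 := by
    rw [Finset.sum_range_succ' (fun j => (if j = 0 then 0 else κ j) * X j ^ 2) m]
    simp only [eq_self_iff_true, if_true, zero_mul, add_zero]
    exact Finset.sum_congr rfl fun j _ => by rw [if_neg (by omega)]
  have e5 : (∑ j ∈ Finset.range m, (if j = 0 then 0 else κ j) * X j ^ 2)
      + (if m = 0 then 0 else κ m) * X m ^ 2
      = ∑ j ∈ Finset.range m, κ (j+1) * X (j+1) ^ 2 := by
    rw [← e4, Finset.sum_range_succ]
  have expand : ∀ ℓ ∈ Finset.range m, κ (ℓ+1) * (X (ℓ+1) - X ℓ) ^ 2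
      = κ (ℓ+1) * X (ℓ+1) ^ 2 + κ (ℓ+1) * X ℓ ^ 2
        + (-(κ (ℓ+1) * X (ℓ+1) * X ℓ)) + (-(κ (ℓ+1) * X ℓ * X (ℓ+1))) := by
    intro ℓ _; ring
  rw [Finset.sum_congr rfl expand]
  simp only [Finset.sum_add_distrib]
  linarith [e5]
lemma spen_le (d L : ℕ) (κ : ℕ → ℝ) (u : Fin L × Fin d → ℂ) :
    Spen d L κ u ≤ specNormR (Kmat L κ) * ∑ p, ‖u p‖ ^ 2 := by
  classical
  set xr : Fin d → Fin L → ℝ := fun i ℓ => (u (ℓ, i)).re with hxr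
  set xi : Fin d → Fin L → ℝ := fun i ℓ => (u (ℓ, i)).im with hxi
  have h1 : ∀ ℓ : Fin L, (if h : (ℓ : ℕ) + 1 < L then
        κ ((ℓ : ℕ) + 1) * ∑ i : Fin d, ‖u (⟨(ℓ : ℕ) + 1, h⟩, i) - u (ℓ, i)‖ ^ 2 else 0)
      = ∑ i : Fin d,
          ((if h : (ℓ : ℕ) + 1 < L then
              κ ((ℓ : ℕ) + 1) * (xr i ⟨(ℓ : ℕ) + 1, h⟩ - xr i ℓ) ^ 2 else 0)
          + (if h : (ℓ : ℕ) + 1 < L then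
              κ ((ℓ : ℕ) + 1) * (xi i ⟨(ℓ : ℕ) + 1, h⟩ - xi i ℓ) ^ 2 else 0)) := by
    intro ℓ
    by_cases h : (ℓ : ℕ) + 1 < L
    · simp only [dif_pos h, Finset.mul_sum, ← Finset.sum_add_distrib]
      refine Finset.sum_congr rfl fun i _ => ?_
      rw [norm_sq_c]
      simp only [hxr, hxi, Complex.sub_re, Complex.sub_im]
      ring
    · simp [dif_neg h]
  have hsplit : Spen d L κ u
      = ∑ i : Fin d,
          ((∑ ℓ : Fin L, if h : (ℓ : ℕ) + 1 < L then
              κ ((ℓ : ℕ) + 1) * (xr i ⟨(ℓ : ℕ) + 1, h⟩ - xr i ℓ) ^ 2 else 0)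
          + (∑ ℓ : Fin L, if h : (ℓ : ℕ) + 1 < L then
              κ ((ℓ : ℕ) + 1) * (xi i ⟨(ℓ : ℕ) + 1, h⟩ - xi i ℓ) ^ 2 else 0)) := by
    unfold Spen
    rw [Finset.sum_congr rfl fun ℓ _ => h1 ℓ, Finset.sum_comm]
    exact Finset.sum_congr rfl fun i _ => Finset.sum_add_distrib
  have hbound : ∀ i : Fin d,
      (∑ ℓ : Fin L, if h : (ℓ : ℕ) + 1 < L then
          κ ((ℓ : ℕ) + 1) * (xr i ⟨(ℓ : ℕ) + 1, h⟩ - xr i ℓ) ^ 2 else 0)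
        + (∑ ℓ : Fin L, if h : (ℓ : ℕ) + 1 < L then
          κ ((ℓ : ℕ) + 1) * (xi i ⟨(ℓ : ℕ) + 1, h⟩ - xi i ℓ) ^ 2 else 0)
      ≤ specNormR (Kmat L κ) * (∑ ℓ : Fin L, (xr i ℓ ^ 2 + xi i ℓ ^ 2)) := by
    intro i
    rw [kmat_quad L κ (xr i), kmat_quad L κ (xi i), Finset.mul_sum]
    have := dot_leR (Kmat L κ) (xr i)
    have := dot_leR (Kmat L κ) (xi i)
    calc (xr i) ⬝ᵥ Kmat L κ *ᵥ (xr i) + (xi i) ⬝ᵥ Kmat L κ *ᵥ (xi i)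
        ≤ specNormR (Kmat L κ) * (∑ ℓ, xr i ℓ ^ 2)
          + specNormR (Kmat L κ) * (∑ ℓ, xi i ℓ ^ 2) := by
          exact add_le_add (dot_leR _ _) (dot_leR _ _)
      _ = ∑ ℓ : Fin L, (specNormR (Kmat L κ) * (xr i ℓ ^ 2 + xi i ℓ ^ 2)) := by
          rw [Finset.mul_sum, Finset.mul_sum, ← Finset.sum_add_distrib]
          exact Finset.sum_congr rfl fun ℓ _ => by ring
  have hnorm : (∑ p : Fin L × Fin d, ‖u p‖ ^ 2)
      = ∑ i : Fin d, ∑ ℓ : Fin L, (xr i ℓ ^ 2 + xi i ℓ ^ 2) := by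
    rw [Fintype.sum_prod_type, Finset.sum_comm]
    exact Finset.sum_congr rfl fun i _ => Finset.sum_congr rfl fun ℓ _ => by
      rw [norm_sq_c]
  rw [hsplit, hnorm, Finset.mul_sum]
  exact Finset.sum_le_sum fun i _ => hbound i

/-- For the regularized objective `J(z) = L_ε(z) + α_T‖z‖₂² + α_S S(z)`
with Hermitian positive semidefinite `Q_j`, `y_j ≥ 0`, `ε > 0`, `α_T, α_S ≥ 0` and
`κ_ℓ > 0`, the second directional derivative satisfies
`d²/dt² J(z+tu)|_{t=0} ≤ 2B‖u‖₂²` with `B = ‖Σ_j Q_j‖ + α_T + α_S ‖K‖`. -/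
theorem stmt8 (d L Jn : ℕ) (Q : Fin Jn → Matrix (Fin L × Fin d) (Fin L × Fin d) ℂ)
    (hQ : ∀ j, (Q j).PosSemidef)
    (y : Fin Jn → ℝ) (hy : ∀ j, 0 ≤ y j) (ε : ℝ) (hε : 0 < ε)
    (αT αS : ℝ) (hαT : 0 ≤ αT) (hαS : 0 ≤ αS)
    (κ : ℕ → ℝ) (hκ : ∀ ℓ, 1 ≤ ℓ → ℓ ≤ L - 1 → 0 < κ ℓ)
    (z u : Fin L × Fin d → ℂ) :
    iteratedDeriv 2 (fun t : ℝ => Jobj Q y ε αT αS κ (z + t • u)) 0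
      ≤ 2 * (specNorm (∑ j, Q j) + αT + αS * specNormR (Kmat L κ)) * ∑ p, ‖u p‖ ^ 2 := by
  classical
  set aa : Fin Jn → ℝ := fun j => (star z ⬝ᵥ Q j *ᵥ z).re + ε with haa
  set bb : Fin Jn → ℝ := fun j => (star z ⬝ᵥ Q j *ᵥ u).re + (star u ⬝ᵥ Q j *ᵥ z).re with hbb
  set cc : Fin Jn → ℝ := fun j => (star u ⬝ᵥ Q j *ᵥ u).re with hcc
  set ss : Fin Jn → ℝ := fun j => Real.sqrt (y j + ε) with hss
  set cA : ℝ := αT * (∑ p, ‖z p‖ ^ 2) + αS * Spen d L κ z with hcA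
  set cB : ℝ := αT * (∑ p, 2 * ((z p * (starRingEnd ℂ) (u p)).re)) + αS * SpenX d L κ z u
    with hcB
  set cC : ℝ := αT * (∑ p, ‖u p‖ ^ 2) + αS * Spen d L κ u with hcC
  -- positivity of the PSD forms
  have hre : ∀ (j : Fin Jn) (v : Fin L × Fin d → ℂ), 0 ≤ (star v ⬝ᵥ Q j *ᵥ v).re := by
    intro j v
    have := (hQ j).dotProduct_mulVec_nonneg v
    simpa using (Complex.le_def.mp this).1
  have hq : ∀ (j : Fin Jn) (t : ℝ), (star (z + t • u) ⬝ᵥ Q j *ᵥ (z + t • u)).re + ε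
      = aa j + bb j * t + cc j * t ^ 2 := by
    intro j t
    simp only [haa, hbb, hcc]
    rw [dot_expand]
    ring
  have hpos : ∀ (j : Fin Jn) (t : ℝ), 0 < aa j + bb j * t + cc j * t ^ 2 := by
    intro j t
    rw [← hq j t]
    have := hre j (z + t • u)
    linarith
  have hpe : ∀ (j : Fin Jn) (t : ℝ), ε ≤ aa j + bb j * t + cc j * t ^ 2 := by
    intro j t
    rw [← hq j t]
    have := hre j (z + t • u)
    linarith
  -- the objective along the line
  have hfun : ∀ t : ℝ, Jobj Q y ε αT αS κ (z + t • u)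
      = (∑ j, (Real.sqrt (aa j + bb j * t + cc j * t ^ 2) - ss j) ^ 2)
        + (cA + cB * t + cC * t ^ 2) := by
    intro t
    unfold Jobj
    rw [spen_expand]
    have h2 : (∑ p, ‖(z + t • u) p‖ ^ 2)
        = (∑ p, ‖z p‖ ^ 2) + (∑ p, 2 * ((z p * (starRingEnd ℂ) (u p)).re)) * t
          + (∑ p, ‖u p‖ ^ 2) * t ^ 2 := by
      simp only [Pi.add_apply, Pi.smul_apply]
      rw [Finset.sum_congr rfl (fun p _ =>
        norm_add_smul_sq (z p) (u p) t), Finset.sum_add_distrib, Finset.sum_add_distrib,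
        ← Finset.sum_mul, ← Finset.sum_mul]
    rw [h2]
    rw [Finset.sum_congr rfl (fun j _ => by rw [hq j t] :
      ∀ j ∈ Finset.univ, (Real.sqrt ((star (z + t • u) ⬝ᵥ Q j *ᵥ (z + t • u)).re + ε)
          - Real.sqrt (y j + ε)) ^ 2
        = (Real.sqrt (aa j + bb j * t + cc j * t ^ 2) - Real.sqrt (y j + ε)) ^ 2)]
    simp only [hss, hcA, hcB, hcC]
    ring
  have hfe : (fun t : ℝ => Jobj Q y ε αT αS κ (z + t • u))
      = fun t => (∑ j, (Real.sqrt (aa j + bb j * t + cc j * t ^ 2) - ss j) ^ 2)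
        + (cA + cB * t + cC * t ^ 2) := funext hfun
  -- first derivative
  have hgd : ∀ t : ℝ, HasDerivAt (fun t : ℝ => Jobj Q y ε αT αS κ (z + t • u))
      ((∑ j, phiD (aa j) (bb j) (cc j) (ss j) t) + (cB + 2 * cC * t)) t := by
    intro t
    rw [hfe]
    exact (HasDerivAt.fun_sum (fun j _ =>
      hasDerivAt_phi (aa j) (bb j) (cc j) (ss j) (hpos j) t)).add (hasDerivAt_q cA cB cC t)
  have hd1 : deriv (fun t : ℝ => Jobj Q y ε αT αS κ (z + t • u))
      = fun t => (∑ j, phiD (aa j) (bb j) (cc j) (ss j) t) + (cB + 2 * cC * t) :=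
    funext fun t => (hgd t).deriv
  -- second derivative
  have hgd2 : HasDerivAt (fun t : ℝ =>
        (∑ j, phiD (aa j) (bb j) (cc j) (ss j) t) + (cB + 2 * cC * t))
      ((∑ j, (2 * cc j - ss j * (4 * aa j * cc j - (bb j) ^ 2)
          / (2 * aa j * Real.sqrt (aa j)))) + 2 * cC) 0 :=
    (HasDerivAt.fun_sum (fun j _ =>
      hasDerivAt_phiD (aa j) (bb j) (cc j) (ss j) (hpos j))).add
      (hasDerivAt_lin cB (2 * cC) 0)
  have hiter : iteratedDeriv 2 (fun t : ℝ => Jobj Q y ε αT αS κ (z + t • u)) 0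
      = (∑ j, (2 * cc j - ss j * (4 * aa j * cc j - (bb j) ^ 2)
          / (2 * aa j * Real.sqrt (aa j)))) + 2 * cC := by
    rw [iteratedDeriv_succ, iteratedDeriv_one, hd1]
    exact hgd2.deriv
  rw [hiter]
  -- bounds
  have hC2 : (0:ℝ) ≤ ∑ p, ‖u p‖ ^ 2 := by positivity
  have hDj : ∀ j : Fin Jn, 2 * cc j - ss j * (4 * aa j * cc j - (bb j) ^ 2)
      / (2 * aa j * Real.sqrt (aa j)) ≤ 2 * cc j := by
    intro j
    have ha : 0 < aa j := by nlinarith [hpos j 0]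
    have hdisc := quad_disc (aa j) (bb j) (cc j) ε hε (hre j u) (hpe j)
    have hs0 : 0 ≤ ss j := Real.sqrt_nonneg _
    have : 0 ≤ ss j * (4 * aa j * cc j - (bb j) ^ 2) / (2 * aa j * Real.sqrt (aa j)) := by
      apply div_nonneg
      · exact mul_nonneg hs0 (by linarith)
      · positivity
    linarith
  have hsum1 : (∑ j, (2 * cc j - ss j * (4 * aa j * cc j - (bb j) ^ 2)
      / (2 * aa j * Real.sqrt (aa j)))) ≤ ∑ j, 2 * cc j :=
    Finset.sum_le_sum fun j _ => hDj j
  have hcsum : (∑ j, cc j) = (star u ⬝ᵥ (∑ j, Q j) *ᵥ u).re := by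
    have h1 : (∑ j, Q j) *ᵥ u = ∑ j, Q j *ᵥ u := by
      ext k
      simp only [Matrix.mulVec, dotProduct, Finset.sum_apply, Matrix.sum_apply,
        Finset.sum_mul]
      exact Finset.sum_comm
    have h2 : star u ⬝ᵥ (∑ j, Q j *ᵥ u) = ∑ j, star u ⬝ᵥ (Q j *ᵥ u) := by
      simp only [dotProduct, Finset.sum_apply, Finset.mul_sum]
      exact Finset.sum_comm
    rw [h1, h2, Complex.re_sum]
  have hQbound : (∑ j, cc j) ≤ specNorm (∑ j, Q j) * ∑ p, ‖u p‖ ^ 2 := by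
    rw [hcsum]; exact dot_leC _ _
  have hSbound : Spen d L κ u ≤ specNormR (Kmat L κ) * ∑ p, ‖u p‖ ^ 2 := spen_le d L κ u
  have hCC : cC ≤ (αT + αS * specNormR (Kmat L κ)) * ∑ p, ‖u p‖ ^ 2 := by
    rw [hcC]
    have := mul_le_mul_of_nonneg_left hSbound hαS
    nlinarith
  calc (∑ j, (2 * cc j - ss j * (4 * aa j * cc j - (bb j) ^ 2)
        / (2 * aa j * Real.sqrt (aa j)))) + 2 * cC
      ≤ (∑ j, 2 * cc j) + 2 * cC := by linarith
    _ = 2 * (∑ j, cc j) + 2 * cC := by rw [Finset.mul_sum]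
    _ ≤ 2 * (specNorm (∑ j, Q j) * ∑ p, ‖u p‖ ^ 2)
        + 2 * ((αT + αS * specNormR (Kmat L κ)) * ∑ p, ‖u p‖ ^ 2) := by
        have := hQbound; have := hCC; nlinarith
    _ = 2 * (specNorm (∑ j, Q j) + αT + αS * specNormR (Kmat L κ)) * ∑ p, ‖u p‖ ^ 2 := by
        ring
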